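/- Let (t_i) be the coefficients of a nonzero vector in (ℂ^d)^{⊗n} that is an eigenvector of D^{⊗n} for every diagonal unitary D. Then for any two multi-indices j, l with t_j ≠ 0 and t_l ≠ 0, and for every k ∈ {0,…,d−1}, the number of occurrences of k in j equals the number of occurrences of k in l. -/

import Mathlib

/-!
Take `D = diag(1, …, ζ, …, 1)`, with a primitive `(n+1)`-st root of unity `ζ` in slot `k`.
`D^{⊗n}` multiplies `|i⟩` by `ζ ^ #{α | i α = k}`, so all multi-indices in the support of an
eigenvector share this factor, namely the eigenvalue. The counts lie in `[0, n]`, where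
`m ↦ ζ ^ m` is injective.
-/

open scoped BigOperators

/-- The action of `U^{⊗n}` on the coefficient vector of a state in `(ℂ^d)^{⊗n}`. -/
noncomputable def tensorAction {d n : ℕ} (U : Matrix (Fin d) (Fin d) ℂ)
    (t : (Fin n → Fin d) → ℂ) : (Fin n → Fin d) → ℂ :=
  fun i => ∑ j : Fin n → Fin d, (∏ α : Fin n, U (i α) (j α)) * t j

lemma tensorAction_diagonal {d n : ℕ} (D : Fin d → ℂ) (t : (Fin n → Fin d) → ℂ)
    (i : Fin n → Fin d) :
    tensorAction (Matrix.diagonal D) t i = (∏ α : Fin n, D (i α)) * t i := by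
  refine (Fintype.sum_eq_single i fun j hji => ?_).trans (by simp)
  obtain ⟨α, hα⟩ : ∃ α, i α ≠ j α := Function.ne_iff.mp (Ne.symm hji)
  rw [Finset.prod_eq_zero (Finset.mem_univ α) (Matrix.diagonal_apply_ne D hα), zero_mul]

lemma prod_diagonal_eq_of_tensorAction_eq_smul {d n : ℕ} {D : Fin d → ℂ}
    {t : (Fin n → Fin d) → ℂ} {c : ℂ} (hc : tensorAction (Matrix.diagonal D) t = c • t)
    {i : Fin n → Fin d} (hi : t i ≠ 0) :
    ∏ α : Fin n, D (i α) = c := by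
  have := congrFun hc i
  rw [tensorAction_diagonal, Pi.smul_apply, smul_eq_mul] at this
  exact mul_right_cancel₀ hi this

lemma prod_ite_eq_pow_card_filter {ι κ M : Type*} [Fintype ι] [DecidableEq κ] [CommMonoid M]
    (j : ι → κ) (k : κ) (x : M) :
    ∏ α, (if j α = k then x else 1) = x ^ (Finset.univ.filter fun α => j α = k).card := by
  rw [Finset.prod_ite, Finset.prod_const, Finset.prod_const_one, mul_one]

lemma card_filter_lt_succ {n : ℕ} (p : Fin n → Prop) [DecidablePred p] :
    (Finset.univ.filter p).card < n + 1 :=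
  Nat.lt_succ_of_le ((Finset.card_filter_le _ _).trans_eq (Finset.card_fin n))

theorem stmt_5_general (d n : ℕ) (t : (Fin n → Fin d) → ℂ)
    (hdiag : ∀ D : Fin d → ℂ, (∀ a : Fin d, ‖D a‖ = 1) →
      ∃ c : ℂ, tensorAction (Matrix.diagonal D) t = c • t) :
    ∀ j l : Fin n → Fin d, t j ≠ 0 → t l ≠ 0 → ∀ k : Fin d,
      (Finset.univ.filter fun α : Fin n => j α = k).card =
        (Finset.univ.filter fun α : Fin n => l α = k).card := by
  intro j l hj hl k
  obtain ⟨ζ, hζ⟩ : ∃ ζ : ℂ, IsPrimitiveRoot ζ (n + 1) :=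
    ⟨_, Complex.isPrimitiveRoot_exp (n + 1) n.succ_ne_zero⟩
  have hζ_norm : ‖ζ‖ = 1 := Complex.norm_eq_one_of_pow_eq_one hζ.pow_eq_one n.succ_ne_zero
  obtain ⟨c, hc⟩ := hdiag (fun a => if a = k then ζ else 1) fun a => by
    split_ifs <;> simp [hζ_norm]
  have hpow : ∀ i, t i ≠ 0 → ζ ^ (Finset.univ.filter fun α => i α = k).card = c := fun i hi => by
    rw [← prod_ite_eq_pow_card_filter]
    exact prod_diagonal_eq_of_tensorAction_eq_smul hc hi
  exact hζ.pow_inj (card_filter_lt_succ _) (card_filter_lt_succ _)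
    ((hpow j hj).trans (hpow l hl).symm)

/-- If the coefficient vector `t` of a nonzero state in `(ℂ^d)^{⊗n}` is an
eigenvector of `D^{⊗n}` for every diagonal unitary `D` (diagonal entries of
modulus one), then any two multi-indices carrying nonzero coefficients contain
every value `k ∈ {0,…,d-1}` equally often. -/
theorem stmt_5 (d n : ℕ) (t : (Fin n → Fin d) → ℂ) (ht : t ≠ 0)
    (hdiag : ∀ D : Fin d → ℂ, (∀ a : Fin d, ‖D a‖ = 1) →
      ∃ c : ℂ, tensorAction (Matrix.diagonal D) t = c • t) :
    ∀ j l : Fin n → Fin d, t j ≠ 0 → t l ≠ 0 → ∀ k : Fin d,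
      (Finset.univ.filter fun α : Fin n => j α = k).card =
        (Finset.univ.filter fun α : Fin n => l α = k).card :=
  stmt_5_general d n t hdiag
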